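/- arXiv:1703.08747 — 2 statements merged into one kernel-verified Lean document; each statement's English description precedes it below -/
import Mathlib

section
/- Under the canonical isomorphism V*⊗V* ≅ (V⊗V)* (pairing f⊗g with v⊗w to f(v)·g(w)), the annihilator of the subspace R of V⊗V equals the K-span of the following elements of V*⊗V*: (a) all f_{ij}^I ⊗ f_{ab}^J (with r-indices ranging over the generator index set) such that it is NOT the case that [j = a and (either I = J, or i ∈ J and every m ∈ J∖{i} satisfies i < m < b)]; and (b) all elements f_{ij}^I ⊗ f_{jl}^J − f_{ij'}^I ⊗ f_{j'l}^{(J∖{j'})∪{j}}, where i ∈ J, every m ∈ J∖{i} satisfies i < m < l, j' ∈ J∖((J∩I)∪{i}), and all four lower-index pairs with their superscripts are valid indices of the basis of V. -/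
/-!
Statement 1: under the canonical isomorphism `V* ⊗ V* ≅ (V ⊗ V)*`, the annihilator of the
subspace `R ⊆ V ⊗ V` of quadratic relations equals the span of the listed elements.
-/

noncomputable section

open scoped TensorProduct

/-- Index type for the basis `e_{ij}^I` of `V`:
`1 ≤ i < j ≤ n`, `I ⊆ {1,…,n}`, `|I| = k-1`, `i, j ∉ I`.  An element is `(I, i, j)`. -/
abbrev VIdx (n k : ℕ) : Type :=
  {x : Finset ℕ × ℕ × ℕ //
    x.1 ⊆ Finset.Icc 1 n ∧ x.1.card = k - 1 ∧
    x.2.1 ∈ Finset.Icc 1 n ∧ x.2.2 ∈ Finset.Icc 1 n ∧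
    x.2.1 < x.2.2 ∧ x.2.1 ∉ x.1 ∧ x.2.2 ∉ x.1}

variable (K : Type) [Field K] (n k : ℕ)

/-- The vector space `V` with basis indexed by `VIdx n k`. -/
abbrev V : Type := VIdx n k →₀ K

/-- The basis vector `e_{ij}^I` of `V`. -/
def e (g : VIdx n k) : V K n k := Finsupp.single g 1

/-- The dual basis vector `f_{ij}^I` of `V*`. -/
def f (g : VIdx n k) : Module.Dual K (V K n k) := Finsupp.lapply g

/-- The subspace `R ⊆ V ⊗ V` spanned by the quadratic parts (7)–(8) of the relations. -/
def Rsub : Submodule K (V K n k ⊗[K] V K n k) :=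
  Submodule.span K (
    -- (7) e_{ij}^I ⊗ e_{jl}^I
    {x | ∃ g1 g2 : VIdx n k, g1.1.1 = g2.1.1 ∧ g1.1.2.2 = g2.1.2.1 ∧
        x = e K n k g1 ⊗ₜ[K] e K n k g2} ∪
    -- (8) Σ_{1 ≤ j ≤ k-1, l_j ∉ M} e_{l₀l_j}^M ⊗ e_{l_jl_k}^{L∖{l_j,l_k}},
    -- L = {l₀ < ⋯ < l_k} ⊆ {1,…,n}, |M| = k-1, l₀ ∉ M
    {x | ∃ (l : ℕ → ℕ) (M : Finset ℕ) (a b : ℕ → VIdx n k),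
        (∀ s t : ℕ, s < t → t ≤ k → l s < l t) ∧
        (∀ t ≤ k, l t ∈ Finset.Icc 1 n) ∧
        M ⊆ Finset.Icc 1 n ∧ M.card = k - 1 ∧ l 0 ∉ M ∧
        (∀ j, 1 ≤ j → j ≤ k - 1 → l j ∉ M →
          (a j).1 = (M, l 0, l j) ∧
          (b j).1 = ((Finset.range (k + 1)).image l \ {l j, l k}, l j, l k)) ∧
        x = ∑ j ∈ (Finset.Ico 1 k).filter (fun j => l j ∉ M),
              e K n k (a j) ⊗ₜ[K] e K n k (b j)})

/-- The compatibility condition on a pair of indices: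
`j = a` and (either `I = J`, or `i ∈ J` and every `m ∈ J ∖ {i}` satisfies `i < m < b`). -/
def Compat (g g' : VIdx n k) : Prop :=
  g.1.2.2 = g'.1.2.1 ∧
    (g.1.1 = g'.1.1 ∨
      (g.1.2.1 ∈ g'.1.1 ∧ ∀ m ∈ g'.1.1 \ {g.1.2.1}, g.1.2.1 < m ∧ m < g'.1.2.2))

/-- The claimed spanning set of the annihilator, inside `V* ⊗ V*`. -/
def annS : Set (Module.Dual K (V K n k) ⊗[K] Module.Dual K (V K n k)) :=
  -- (a) f_{ij}^I ⊗ f_{ab}^J for incompatible pairs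
  {x | ∃ g g' : VIdx n k, ¬ Compat n k g g' ∧ x = f K n k g ⊗ₜ[K] f K n k g'} ∪
  -- (b) f_{ij}^I ⊗ f_{jl}^J - f_{ij'}^I ⊗ f_{j'l}^{(J∖{j'})∪{j}}
  {x | ∃ (g1 g2 g1' g2' : VIdx n k),
      g1.1.2.2 = g2.1.2.1 ∧ g1.1.2.1 ∈ g2.1.1 ∧
      (∀ m ∈ g2.1.1 \ {g1.1.2.1}, g1.1.2.1 < m ∧ m < g2.1.2.2) ∧
      g1'.1.2.2 ∈ g2.1.1 ∧ g1'.1.2.2 ∉ g2.1.1 ∩ g1.1.1 ∧ g1'.1.2.2 ≠ g1.1.2.1 ∧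
      g1'.1.1 = g1.1.1 ∧ g1'.1.2.1 = g1.1.2.1 ∧
      g2'.1 = (insert g1.1.2.2 (g2.1.1.erase g1'.1.2.2), g1'.1.2.2, g2.1.2.2) ∧
      x = f K n k g1 ⊗ₜ[K] f K n k g2 - f K n k g1' ⊗ₜ[K] f K n k g2'}

/-!
A pair `(g, h)` of indices gives the basis vector `e_g ⊗ e_h` of `V ⊗ V`, and `dualDistrib` sends
`f_g ⊗ f_h` to its coordinate function. The relations (7) are basis vectors, and a relation (8) is
the sum of `e_g ⊗ e_h` over the pairs of "type 8" with a given key `(L, M)`; the pairs of type 7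
and of type 8 are disjoint and together form the compatible pairs. The annihilator of such a span
is spanned by the coordinates of the pairs of neither type together with the differences of the
coordinates of two pairs with the same key, and the latter are the elements (b): two pairs of
type 8 with the same key differ by an exchange of the middle index.
-/

open Finset Submodule TensorProduct Module

section FiberSums

variable {ι κ R E : Type*}

theorem Module.Basis.tensorProduct_coord [CommSemiring R] {M N : Type*} [AddCommMonoid M]
    [Module R M] [AddCommMonoid N] [Module R N] (b : Basis ι R M) (c : Basis κ R N) (i : ι)
    (j : κ) : (b.tensorProduct c).coord (i, j) = dualDistrib R M N (b.coord i ⊗ₜ c.coord j) :=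
  TensorProduct.ext' fun m n => by
    simp [Basis.tensorProduct_repr_tmul_apply, dualDistrib_apply, mul_comm]

variable [Fintype ι] [CommRing R] [AddCommMonoid E] [Module R E]

theorem Module.Basis.dualAnnihilator_span_union_fiberSums (b : Basis ι R E) {Z S : Set ι}
    [DecidablePred (· ∈ S)] [DecidableEq κ] (hZS : Disjoint Z S) (key : ι → κ) :
    (span R (b '' Z ∪ Set.range fun t => ∑ p with p ∈ S ∧ key p = t, b p)).dualAnnihilator =
      span R (b.coord '' (Z ∪ S)ᶜ ∪
        {φ | ∃ p ∈ S, ∃ q ∈ S, key p = key q ∧ p ≠ q ∧ φ = b.coord p - b.coord q}) := by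
  classical
  have hmem (φ : Dual R E) :
      φ ∈ (span R (b '' Z ∪ Set.range fun t => ∑ p with p ∈ S ∧ key p = t, b p)).dualAnnihilator ↔
        (∀ p ∈ Z, φ (b p) = 0) ∧ ∀ t, ∑ p with p ∈ S ∧ key p = t, φ (b p) = 0 := by
    simp only [← SetLike.mem_coe, coe_dualAnnihilator_span, Set.mem_ofPred_eq, Set.union_subset_iff,
      Set.image_subset_iff, Set.range_subset_iff, ← map_sum]
    rfl
  apply le_antisymm
  · intro φ hφ
    obtain ⟨hZ, hfiber⟩ := (hmem φ).1 hφ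
    rw [← b.sum_dual_apply_smul_coord φ, ← sum_filter_add_sum_filter_not univ (· ∈ S),
      ← sum_fiberwise_of_maps_to (fun p hp => mem_image_of_mem key hp)]
    refine add_mem (sum_mem fun t ht => ?_) (sum_mem fun p hp => ?_)
    · obtain ⟨p₀, hp₀, rfl⟩ := mem_image.1 ht
      -- the coefficients sum to zero over the fibre, so `coord p₀` may be subtracted from each
      -- `coord p` in it
      have hshift : ∑ p ∈ {p ∈ univ | p ∈ S} with key p = key p₀, φ (b p) • b.coord p =
          ∑ p ∈ {p ∈ univ | p ∈ S} with key p = key p₀,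
            φ (b p) • (b.coord p - b.coord p₀) := by
        rw [filter_filter]
        simp_rw [smul_sub, sum_sub_distrib, ← sum_smul, hfiber, zero_smul, sub_zero]
      rw [hshift]
      refine sum_mem fun p hp => smul_mem _ _ ?_
      simp only [filter_filter, mem_filter, mem_univ, true_and] at hp hp₀
      rcases eq_or_ne p p₀ with rfl | hne
      · rw [sub_self]
        exact zero_mem _
      · exact subset_span (Or.inr ⟨p, hp.1, p₀, hp₀, hp.2, hne, rfl⟩)
    · simp only [mem_filter, mem_univ, true_and] at hp
      by_cases hpZ : p ∈ Z
      · rw [hZ p hpZ, zero_smul]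
        exact zero_mem _
      · exact smul_mem _ _ (subset_span (Or.inl ⟨p, by simp [hpZ, hp], rfl⟩))
  · rw [span_le]
    rintro _ (⟨p, hp, rfl⟩ | ⟨p, hpS, q, hqS, hkey, -, rfl⟩) <;>
      refine (hmem _).2 ⟨fun z hz => ?_, fun t => ?_⟩ <;>
      simp only [LinearMap.sub_apply, sum_sub_distrib, Basis.coord_apply, Basis.repr_self,
        Finsupp.single_apply, sum_ite_eq', mem_filter, mem_univ, true_and]
    · rw [if_neg fun h : z = p => hp (Or.inl (h ▸ hz))]
    · rw [if_neg fun h => hp (Or.inr h.1)]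
    · rw [if_neg (hZS.ne_of_mem hz hpS), if_neg (hZS.ne_of_mem hz hqS), sub_zero]
    · simp only [hpS, hqS, hkey, true_and, sub_self]

end FiberSums

namespace VIdx

variable {n k}

abbrev I (g : VIdx n k) : Finset ℕ := g.1.1

abbrev i (g : VIdx n k) : ℕ := g.1.2.1

abbrev j (g : VIdx n k) : ℕ := g.1.2.2

lemma I_subset_Icc (g : VIdx n k) : g.I ⊆ Icc 1 n := g.2.1

lemma card_I (g : VIdx n k) : #g.I = k - 1 := g.2.2.1

lemma j_mem_Icc (g : VIdx n k) : g.j ∈ Icc 1 n := g.2.2.2.2.1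

lemma i_lt_j (g : VIdx n k) : g.i < g.j := g.2.2.2.2.2.1

lemma i_notMem (g : VIdx n k) : g.i ∉ g.I := g.2.2.2.2.2.2.1

lemma j_notMem (g : VIdx n k) : g.j ∉ g.I := g.2.2.2.2.2.2.2

lemma ext {g h : VIdx n k} (hI : g.I = h.I) (hi : g.i = h.i) (hj : g.j = h.j) : g = h :=
  Subtype.ext (Prod.ext hI (Prod.ext hi hj))

instance : Finite (VIdx n k) :=
  Set.Finite.to_subtype <|
    ((Finset.Icc 1 n).powerset ×ˢ Finset.Icc 1 n ×ˢ Finset.Icc 1 n).finite_toSet.subset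
      fun _ hx => by
        simp only [coe_product, coe_powerset, Set.mem_prod, Set.mem_preimage, Set.mem_powerset_iff]
        exact ⟨hx.1, hx.2.2.1, hx.2.2.2.1⟩

noncomputable instance : Fintype (VIdx n k) := Fintype.ofFinite _

end VIdx

section Pairs

variable {n k}

def type7Pairs (n k : ℕ) : Set (VIdx n k × VIdx n k) := {p | p.1.I = p.2.I ∧ p.1.j = p.2.i}

/-- The pairs `(e_{l₀l_j}^M, e_{l_jl_k}^{L∖{l_j,l_k}})` occurring in the relations (8); such a
pair is determined by `l_j` and its key `(L, M)`. -/
def type8Pairs (n k : ℕ) : Set (VIdx n k × VIdx n k) :=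
  {p | p.1.j = p.2.i ∧ p.1.i ∈ p.2.I ∧ ∀ m ∈ p.2.I \ {p.1.i}, p.1.i < m ∧ m < p.2.j}

instance : DecidablePred (· ∈ type8Pairs n k) := fun _ => inferInstanceAs (Decidable (_ ∧ _ ∧ _))

def type8Support (p : VIdx n k × VIdx n k) : Finset ℕ := insert p.1.j (insert p.2.j p.2.I)

def type8Key (p : VIdx n k × VIdx n k) : Finset ℕ × Finset ℕ := (type8Support p, p.1.I)

lemma compat_iff_mem_union (g h : VIdx n k) :
    Compat n k g h ↔ (g, h) ∈ type7Pairs n k ∪ type8Pairs n k := by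
  simp only [Compat, type7Pairs, type8Pairs, Set.mem_union, Set.mem_ofPred_eq]
  tauto

lemma disjoint_type7Pairs_type8Pairs : Disjoint (type7Pairs n k) (type8Pairs n k) :=
  Set.disjoint_left.2 fun p h7 h8 => p.1.i_notMem (h7.1 ▸ h8.2.1)

variable {p q : VIdx n k × VIdx n k}

lemma i_le_of_mem_type8Support (hp : p ∈ type8Pairs n k) {x : ℕ} (hx : x ∈ type8Support p) :
    p.1.i ≤ x := by
  have := p.1.i_lt_j
  have := p.2.i_lt_j
  have := hp.1
  simp only [type8Support, mem_insert] at hx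
  rcases hx with rfl | rfl | hx
  · omega
  · omega
  · rcases eq_or_ne x p.1.i with rfl | hne
    · rfl
    · exact (hp.2.2 x (by simp [hx, hne])).1.le

lemma le_j_of_mem_type8Support (hp : p ∈ type8Pairs n k) {x : ℕ} (hx : x ∈ type8Support p) :
    x ≤ p.2.j := by
  have := p.1.i_lt_j
  have := p.2.i_lt_j
  have := hp.1
  simp only [type8Support, mem_insert] at hx
  rcases hx with rfl | rfl | hx
  · omega
  · rfl
  · rcases eq_or_ne x p.1.i with rfl | hne
    · omega
    · exact (hp.2.2 x (by simp [hx, hne])).2.le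

lemma i_mem_type8Support (hp : p ∈ type8Pairs n k) : p.1.i ∈ type8Support p := by
  simp [type8Support, hp.2.1]

lemma mem_type8Support_left (p : VIdx n k × VIdx n k) : p.1.j ∈ type8Support p := by
  simp [type8Support]

lemma mem_type8Support_right (p : VIdx n k × VIdx n k) : p.2.j ∈ type8Support p := by
  simp [type8Support]

lemma type8Support_sdiff (hp : p ∈ type8Pairs n k) :
    type8Support p \ {p.1.j, p.2.j} = p.2.I := by
  have h₁ : p.1.j ∉ p.2.I := hp.1 ▸ p.2.i_notMem
  ext x
  simp only [type8Support, mem_sdiff, mem_insert, mem_singleton]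
  constructor
  · tauto
  · intro hx
    refine ⟨by tauto, ?_⟩
    rintro (rfl | rfl)
    exacts [h₁ hx, p.2.j_notMem hx]

lemma card_type8Support (hp : p ∈ type8Pairs n k) : #(type8Support p) = k + 1 := by
  have hcard := p.2.card_I
  have hpos : 0 < #p.2.I := card_pos.2 ⟨_, hp.2.1⟩
  rw [type8Support, card_insert_of_notMem, card_insert_of_notMem p.2.j_notMem]
  · omega
  · simp only [mem_insert, not_or]
    exact ⟨(hp.1 ▸ p.2.i_lt_j).ne, hp.1 ▸ p.2.i_notMem⟩

lemma type8Support_subset_Icc (p : VIdx n k × VIdx n k) : type8Support p ⊆ Icc 1 n := by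
  simp only [type8Support, insert_subset_iff]
  exact ⟨p.1.j_mem_Icc, p.2.j_mem_Icc, p.2.I_subset_Icc⟩

lemma i_eq_of_type8Support_eq (hp : p ∈ type8Pairs n k) (hq : q ∈ type8Pairs n k)
    (h : type8Support p = type8Support q) : p.1.i = q.1.i :=
  le_antisymm (i_le_of_mem_type8Support hp (h ▸ i_mem_type8Support hq))
    (i_le_of_mem_type8Support hq (h.symm ▸ i_mem_type8Support hp))

lemma j_eq_of_type8Support_eq (hp : p ∈ type8Pairs n k) (hq : q ∈ type8Pairs n k)
    (h : type8Support p = type8Support q) : p.2.j = q.2.j :=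
  le_antisymm (le_j_of_mem_type8Support hq (h ▸ mem_type8Support_right p))
    (le_j_of_mem_type8Support hp (h.symm ▸ mem_type8Support_right q))

lemma eq_of_type8Key_eq (hp : p ∈ type8Pairs n k) (hq : q ∈ type8Pairs n k)
    (hkey : type8Key p = type8Key q) (hj : p.1.j = q.1.j) : p = q := by
  simp only [type8Key, Prod.mk.injEq] at hkey
  obtain ⟨hL, hM⟩ := hkey
  have hj₂ := j_eq_of_type8Support_eq hp hq hL
  refine Prod.ext (VIdx.ext hM (i_eq_of_type8Support_eq hp hq hL) hj)
    (VIdx.ext ?_ (by rw [← hp.1, ← hq.1, hj]) hj₂)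
  rw [← type8Support_sdiff hp, ← type8Support_sdiff hq, hL, hj, hj₂]

end Pairs

section Exchange

variable {n k}

/-- The conditions relating `(g1', g2') = q` to `(g1, g2) = p` in the generators (b). -/
def IsExchange (p q : VIdx n k × VIdx n k) : Prop :=
  q.1.j ∈ p.2.I ∧ q.1.j ∉ p.2.I ∩ p.1.I ∧ q.1.j ≠ p.1.i ∧ q.1.I = p.1.I ∧ q.1.i = p.1.i ∧
    q.2.1 = (insert p.1.j (p.2.I.erase q.1.j), q.1.j, p.2.j)

variable {p q : VIdx n k × VIdx n k}

lemma snd_I_eq_insert_erase (hp : p ∈ type8Pairs n k) (hq : q ∈ type8Pairs n k)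
    (hj : q.1.j ≠ p.1.j) (hj₂ : q.2.j = p.2.j) (hL : type8Support q = type8Support p) :
    q.2.I = insert p.1.j (p.2.I.erase q.1.j) := by
  rw [← type8Support_sdiff hq, hL, hj₂]
  have hlt : p.1.j < p.2.j := hp.1 ▸ p.2.i_lt_j
  have hj₂I := p.2.j_notMem
  ext x
  simp only [type8Support, mem_sdiff, mem_insert, mem_singleton, mem_erase, not_or]
  constructor
  · rintro ⟨rfl | rfl | hx, h₁, h₂⟩
    · exact Or.inl rfl
    · exact absurd rfl h₂
    · exact Or.inr ⟨h₁, hx⟩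
  · rintro (rfl | ⟨h₁, hx⟩)
    · exact ⟨Or.inl rfl, fun h => hj h.symm, hlt.ne⟩
    · exact ⟨Or.inr (Or.inr hx), h₁, fun h => hj₂I (h ▸ hx)⟩

theorem isExchange_iff (hp : p ∈ type8Pairs n k) :
    IsExchange p q ↔ q ∈ type8Pairs n k ∧ type8Key p = type8Key q ∧ p ≠ q := by
  have hjp : p.1.j ∉ p.2.I := hp.1 ▸ p.2.i_notMem
  constructor
  · rintro ⟨hmem, -, hne, hI, hi, hq₂⟩
    have hqI : q.2.I = insert p.1.j (p.2.I.erase q.1.j) := congrArg (·.1) hq₂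
    have hqi : q.2.i = q.1.j := congrArg (·.2.1) hq₂
    have hqj : q.2.j = p.2.j := congrArg (·.2.2) hq₂
    have hq : q ∈ type8Pairs n k := by
      refine ⟨hqi.symm, ?_, fun m hm => ?_⟩
      · rw [hqI, hi]
        exact mem_insert_of_mem (mem_erase.2 ⟨hne.symm, hp.2.1⟩)
      · simp only [hqI, hi, mem_sdiff, mem_insert, mem_erase, mem_singleton] at hm
        rw [hi, hqj]
        obtain ⟨rfl | ⟨-, hm⟩, hmi⟩ := hm
        · exact ⟨p.1.i_lt_j, hp.1 ▸ p.2.i_lt_j⟩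
        · exact hp.2.2 m (by simp [hm, hmi])
    refine ⟨hq, ?_, fun h => hjp (h ▸ hmem)⟩
    simp only [type8Key, Prod.mk.injEq, hI, and_true]
    ext x
    rcases eq_or_ne x q.1.j with rfl | hx
    · simp [type8Support, hqI, hmem]
    · simp only [type8Support, hqI, hqj, mem_insert, mem_erase, hx, ne_eq, not_false_eq_true,
        true_and, false_or]
      tauto
  · rintro ⟨hq, hkey, hpq⟩
    simp only [type8Key, Prod.mk.injEq] at hkey
    obtain ⟨hL, hM⟩ := hkey
    have hi := i_eq_of_type8Support_eq hp hq hL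
    have hj₂ := j_eq_of_type8Support_eq hp hq hL
    have hj : q.1.j ≠ p.1.j := fun h => hpq (eq_of_type8Key_eq hp hq
      (by simp only [type8Key, hL, hM]) h.symm)
    have hmem : q.1.j ∈ p.2.I := by
      have hmem := hL ▸ mem_type8Support_left q
      have := q.2.i_lt_j
      have := hq.1
      simp only [type8Support, mem_insert] at hmem
      rcases hmem with h | h | h
      · exact absurd h hj
      · omega
      · exact h
    refine ⟨hmem, fun h => q.1.j_notMem (hM ▸ (mem_inter.1 h).2), ?_, hM.symm, hi.symm, ?_⟩
    · have := q.1.i_lt_j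
      omega
    · exact Prod.ext (snd_I_eq_insert_erase hp hq hj hj₂.symm hL.symm)
        (Prod.ext hq.1.symm hj₂.symm)

end Exchange

section Relation8

variable {n k}

lemma exists_strictMonoOn_image_range_eq {L : Finset ℕ} (hL : #L = k + 1) :
    ∃ l : ℕ → ℕ, StrictMonoOn l (Set.Iic k) ∧ (range (k + 1)).image l = L := by
  have hf : (Set.ofPred (· ∈ L)).Finite := L.finite_toSet
  have hcard : #hf.toFinset = k + 1 := by rw [← hL]; congr 1; exact L.finite_toSet_toFinset
  have hl : StrictMonoOn (Nat.nth (· ∈ L)) (Set.Iic k) :=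
    (Nat.nth_strictMonoOn hf).mono fun t (ht : t ≤ k) => by
      rw [Set.mem_Iio, hcard]
      exact Nat.lt_succ_of_le ht
  refine ⟨_, hl, eq_of_subset_of_card_le (fun x hx => ?_) ?_⟩
  · obtain ⟨t, ht, rfl⟩ := mem_image.1 hx
    exact Nat.nth_mem_of_lt_card hf (hcard ▸ mem_range.1 ht)
  · rw [card_image_of_injOn (hl.injOn.mono fun t ht => Nat.lt_succ_iff.1 (mem_range.1 ht)),
      card_range, hL]

lemma apply_zero_eq_i_of_image_eq {p : VIdx n k × VIdx n k} (hp : p ∈ type8Pairs n k)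
    {l : ℕ → ℕ} (hl : StrictMonoOn l (Set.Iic k))
    (himage : (range (k + 1)).image l = type8Support p) : l 0 = p.1.i := by
  have hle (x : ℕ) (hx : x ∈ type8Support p) : l 0 ≤ x := by
    obtain ⟨s, hs, rfl⟩ := mem_image.1 (himage ▸ hx)
    exact (hl.le_iff_le (Set.mem_Iic.2 (Nat.zero_le _))
      (Set.mem_Iic.2 (Nat.lt_succ_iff.1 (mem_range.1 hs)))).2 (Nat.zero_le _)
  exact le_antisymm (hle _ (i_mem_type8Support hp))
    (i_le_of_mem_type8Support hp (himage ▸ mem_image_of_mem l (mem_range.2 (Nat.succ_pos k))))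

variable {l : ℕ → ℕ} {M : Finset ℕ} {a b : ℕ → VIdx n k}
  (hl : StrictMonoOn l (Set.Iic k))
  (hab : ∀ j, 1 ≤ j → j ≤ k - 1 → l j ∉ M →
    (a j).1 = (M, l 0, l j) ∧ (b j).1 = ((range (k + 1)).image l \ {l j, l k}, l j, l k))
include hl hab

lemma mem_type8Pairs_of_relation8 {j : ℕ} (hj : j ∈ Ico 1 k) (hjM : l j ∉ M) :
    (a j, b j) ∈ type8Pairs n k ∧ type8Key (a j, b j) = ((range (k + 1)).image l, M) := by
  obtain ⟨hj₁, hjk⟩ := mem_Ico.1 hj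
  obtain ⟨ha, hb⟩ := hab j hj₁ (by omega) hjM
  have haI : (a j).I = M := congrArg (·.1) ha
  have hai : (a j).i = l 0 := congrArg (·.2.1) ha
  have haj : (a j).j = l j := congrArg (·.2.2) ha
  have hbI : (b j).I = (range (k + 1)).image l \ {l j, l k} := congrArg (·.1) hb
  have hbi : (b j).i = l j := congrArg (·.2.1) hb
  have hbj : (b j).j = l k := congrArg (·.2.2) hb
  have hmem (t : ℕ) (ht : t ≤ k) : l t ∈ (range (k + 1)).image l :=
    mem_image_of_mem l (mem_range.2 (by omega))
  have hlt {s t : ℕ} (hst : s < t) (ht : t ≤ k) : l s < l t :=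
    hl (Set.mem_Iic.2 (by omega)) (Set.mem_Iic.2 ht) hst
  refine ⟨⟨by rw [haj, hbi], ?_, fun m hm => ?_⟩, ?_⟩
  · rw [hai, hbI]
    simp only [mem_sdiff, mem_insert, mem_singleton, not_or]
    exact ⟨hmem 0 (by omega), (hlt (by omega) (by omega)).ne, (hlt (by omega) le_rfl).ne⟩
  · rw [hbI, hai] at hm
    rw [hai, hbj]
    simp only [mem_sdiff, mem_image, mem_range, mem_insert, mem_singleton, not_or] at hm
    obtain ⟨⟨⟨t, ht, rfl⟩, -, htk⟩, ht₀⟩ := hm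
    have ht₀ : t ≠ 0 := by rintro rfl; exact ht₀ rfl
    have htk : t ≠ k := by rintro rfl; exact htk rfl
    exact ⟨hlt (by omega) (by omega), hlt (by omega) le_rfl⟩
  · simp only [type8Key, type8Support, haI, haj, hbI, hbj, Prod.mk.injEq, and_true]
    ext x
    simp only [mem_insert, mem_sdiff, mem_singleton]
    constructor
    · rintro (rfl | rfl | ⟨hx, -⟩)
      exacts [hmem j (by omega), hmem k le_rfl, hx]
    · tauto

lemma sum_relation8_eq_sum_type8Key {E : Type*} [AddCommMonoid E]
    (F : VIdx n k × VIdx n k → E) :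
    ∑ j ∈ Ico 1 k with l j ∉ M, F (a j, b j) =
      ∑ p with p ∈ type8Pairs n k ∧ type8Key p = ((range (k + 1)).image l, M), F p := by
  have haj {j : ℕ} (hj : j ∈ Ico 1 k) (hjM : l j ∉ M) : (a j).j = l j := by
    obtain ⟨hj₁, hjk⟩ := mem_Ico.1 hj
    exact congrArg (·.2.2) (hab j hj₁ (by omega) hjM).1
  refine sum_nbij (fun j => (a j, b j)) (fun j hj => ?_) (fun j₁ hj₁ j₂ hj₂ h => ?_)
    (fun p hp => ?_) fun _ _ => rfl
  · rw [mem_filter] at hj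
    simpa using mem_type8Pairs_of_relation8 hl hab hj.1 hj.2
  · simp only [coe_filter, mem_Ico, Set.mem_ofPred_eq] at hj₁ hj₂
    refine hl.injOn (Set.mem_Iic.2 (by omega)) (Set.mem_Iic.2 (by omega)) ?_
    rw [← haj (mem_Ico.2 hj₁.1) hj₁.2, ← haj (mem_Ico.2 hj₂.1) hj₂.2]
    exact congrArg (·.1.j) h
  · simp only [coe_filter, mem_univ, true_and, Set.mem_ofPred_eq] at hp
    obtain ⟨hp, hkey⟩ := hp
    have hL : type8Support p = (range (k + 1)).image l := congrArg Prod.fst hkey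
    have hlL {x : ℕ} (hx : x ∈ type8Support p) : ∃ t ≤ k, l t = x := by
      obtain ⟨t, ht, rfl⟩ := mem_image.1 (hL ▸ hx)
      exact ⟨t, by simpa [Nat.lt_succ_iff] using ht, rfl⟩
    obtain ⟨t, htk, ht⟩ := hlL (mem_type8Support_left p)
    obtain ⟨s, hsk, hs⟩ := hlL (i_mem_type8Support hp)
    obtain ⟨u, huk, hu⟩ := hlL (mem_type8Support_right p)
    have hst : s < t := (hl.lt_iff_lt hsk htk).1 (by rw [hs, ht]; exact p.1.i_lt_j)
    have htu : t < u := (hl.lt_iff_lt htk huk).1 (by rw [ht, hu, hp.1]; exact p.2.i_lt_j)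
    have hM : p.1.I = M := congrArg Prod.snd hkey
    have htM : l t ∉ M := hM ▸ ht ▸ p.1.j_notMem
    have htI : t ∈ Ico 1 k := mem_Ico.2 ⟨by omega, by omega⟩
    obtain ⟨h8, hkey'⟩ := mem_type8Pairs_of_relation8 hl hab htI htM
    refine ⟨t, mem_filter.2 ⟨htI, htM⟩, eq_of_type8Key_eq h8 hp (hkey'.trans hkey.symm) ?_⟩
    rw [haj htI htM, ht]

end Relation8

section TensorBasis

variable {n k}

def basisVV : Basis (VIdx n k × VIdx n k) K (V K n k ⊗[K] V K n k) :=
  Finsupp.basisSingleOne.tensorProduct Finsupp.basisSingleOne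

lemma basisVV_apply (p : VIdx n k × VIdx n k) :
    basisVV K p = e K n k p.1 ⊗ₜ[K] e K n k p.2 := by
  rw [basisVV, Basis.tensorProduct_apply']
  simp [e]

lemma basisVV_coord (p : VIdx n k × VIdx n k) :
    (basisVV K).coord p = dualDistrib K (V K n k) (V K n k) (f K n k p.1 ⊗ₜ[K] f K n k p.2) :=
  Basis.tensorProduct_coord _ _ p.1 p.2

lemma sum_type8Key_mem_Rsub (t : Finset ℕ × Finset ℕ) :
    ∑ p with p ∈ type8Pairs n k ∧ type8Key p = t, basisVV K p ∈ Rsub K n k := by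
  by_cases ht : ∃ p₀ ∈ type8Pairs n k, type8Key p₀ = t
  swap
  · rw [sum_eq_zero fun p hp => absurd ⟨p, (mem_filter.1 hp).2⟩ ht]
    exact zero_mem _
  obtain ⟨p₀, hp₀, rfl⟩ := ht
  obtain ⟨l, hl, himage⟩ := exists_strictMonoOn_image_range_eq (card_type8Support hp₀)
  set L := type8Support p₀
  set M := p₀.1.I
  have hlL (t : ℕ) (ht : t ≤ k) : l t ∈ L := himage ▸ mem_image_of_mem l (mem_range.2 (by omega))
  have hLIcc : L ⊆ Icc 1 n := type8Support_subset_Icc p₀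
  have hl₀ : l 0 = p₀.1.i := apply_zero_eq_i_of_image_eq hp₀ hl himage
  have hlt {s t : ℕ} (hst : s < t) (ht : t ≤ k) : l s < l t :=
    hl (Set.mem_Iic.2 (by omega)) (Set.mem_Iic.2 ht) hst
  -- only the `j` entering the relation (8) matter, and for those the triples are valid indices
  let a : ℕ → VIdx n k := fun j =>
    if h : ∃ g : VIdx n k, g.1 = (M, l 0, l j) then h.choose else p₀.1
  let b : ℕ → VIdx n k := fun j =>
    if h : ∃ g : VIdx n k, g.1 = (L \ {l j, l k}, l j, l k) then h.choose else p₀.2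
  have hab (j : ℕ) (hj₁ : 1 ≤ j) (hjk : j ≤ k - 1) (hjM : l j ∉ M) :
      (a j).1 = (M, l 0, l j) ∧ (b j).1 = ((range (k + 1)).image l \ {l j, l k}, l j, l k) := by
    have ha : ∃ g : VIdx n k, g.1 = (M, l 0, l j) :=
      ⟨⟨(M, l 0, l j), p₀.1.I_subset_Icc, p₀.1.card_I, hLIcc (hlL 0 (by omega)), hLIcc (hlL j (by omega)),
        hlt (by omega) (by omega), hl₀ ▸ p₀.1.i_notMem, hjM⟩, rfl⟩
    have hb : ∃ g : VIdx n k, g.1 = (L \ {l j, l k}, l j, l k) := by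
      refine ⟨⟨(L \ {l j, l k}, l j, l k), sdiff_subset.trans hLIcc, ?_,
        hLIcc (hlL j (by omega)), hLIcc (hlL k le_rfl), hlt (by omega) le_rfl, by simp,
        by simp⟩, rfl⟩
      rw [card_sdiff_of_subset (by simp [insert_subset_iff, hlL j (by omega), hlL k le_rfl]),
        card_type8Support hp₀, card_pair (hlt (by omega) le_rfl).ne]
      omega
    simp only [a, b, dif_pos ha, dif_pos hb, himage]
    exact ⟨ha.choose_spec, hb.choose_spec⟩
  have hkey : type8Key p₀ = ((range (k + 1)).image l, M) := by rw [himage]; rfl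
  rw [hkey, ← sum_relation8_eq_sum_type8Key hl hab]
  refine subset_span (Or.inr ⟨l, M, a, b, fun s t hst ht => hlt hst ht,
    fun t ht => hLIcc (hlL t ht), p₀.1.I_subset_Icc, p₀.1.card_I, hl₀ ▸ p₀.1.i_notMem, hab, ?_⟩)
  simp only [basisVV_apply]

end TensorBasis

section Main

variable {n k}

lemma Rsub_eq_span :
    Rsub K n k = span K (basisVV K '' type7Pairs n k ∪
      Set.range fun t => ∑ p with p ∈ type8Pairs n k ∧ type8Key p = t, basisVV K p) := by
  refine le_antisymm (span_le.2 ?_) (span_le.2 ?_)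
  · rintro _ (⟨g, h, hI, hj, rfl⟩ | ⟨l, M, a, b, hl, -, -, -, -, hab, rfl⟩)
    · exact subset_span (Or.inl ⟨(g, h), ⟨hI, hj⟩, basisVV_apply K _⟩)
    · refine subset_span (Or.inr ⟨((range (k + 1)).image l, M), ?_⟩)
      dsimp only
      rw [← sum_relation8_eq_sum_type8Key (fun s hs t ht hst => hl s t hst ht) hab]
      simp only [basisVV_apply]
  · rintro _ (⟨p, ⟨hI, hj⟩, rfl⟩ | ⟨t, rfl⟩)
    · exact subset_span (Or.inl ⟨p.1, p.2, hI, hj, basisVV_apply K p⟩)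
    · exact sum_type8Key_mem_Rsub K t

lemma image_dualDistrib_annS :
    dualDistrib K (V K n k) (V K n k) '' annS K n k =
      (basisVV K).coord '' (type7Pairs n k ∪ type8Pairs n k)ᶜ ∪
        {φ | ∃ p ∈ type8Pairs n k, ∃ q ∈ type8Pairs n k, type8Key p = type8Key q ∧ p ≠ q ∧
          φ = (basisVV K).coord p - (basisVV K).coord q} := by
  rw [annS, Set.image_union]
  congr 1
  · ext φ
    simp only [Set.mem_image, Set.mem_ofPred_eq, Set.mem_compl_iff, ← compat_iff_mem_union,
      basisVV_coord, Prod.exists]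
    constructor
    · rintro ⟨_, ⟨g, h, hgh, rfl⟩, rfl⟩
      exact ⟨g, h, hgh, rfl⟩
    · rintro ⟨g, h, hgh, rfl⟩
      exact ⟨_, ⟨g, h, hgh, rfl⟩, rfl⟩
  · ext φ
    simp only [Set.mem_image, Set.mem_ofPred_eq, basisVV_coord]
    constructor
    · rintro ⟨_, ⟨g₁, g₂, g₁', g₂', hj, hi, hbtw, h₁, h₂, h₃, h₄, h₅, h₆, rfl⟩, rfl⟩
      have hexch : IsExchange (g₁, g₂) (g₁', g₂') := ⟨h₁, h₂, h₃, h₄, h₅, h₆⟩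
      obtain ⟨hq, hkey, hne⟩ := (isExchange_iff ⟨hj, hi, hbtw⟩).1 hexch
      exact ⟨(g₁, g₂), ⟨hj, hi, hbtw⟩, (g₁', g₂'), hq, hkey, hne, map_sub _ _ _⟩
    · rintro ⟨p, hp, q, hq, hkey, hne, rfl⟩
      obtain ⟨h₁, h₂, h₃, h₄, h₅, h₆⟩ := (isExchange_iff hp).2 ⟨hq, hkey, hne⟩
      exact ⟨_, ⟨p.1, p.2, q.1, q.2, hp.1, hp.2.1, hp.2.2, h₁, h₂, h₃, h₄, h₅, h₆, rfl⟩,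
        map_sub _ _ _⟩

end Main

theorem statement1 :
    Submodule.map (TensorProduct.dualDistrib K (V K n k) (V K n k))
        (Submodule.span K (annS K n k)) =
      (Rsub K n k).dualAnnihilator := by
  rw [Rsub_eq_span, map_span, image_dualDistrib_annS]
  exact ((basisVV K).dualAnnihilator_span_union_fiberSums disjoint_type7Pairs_type8Pairs
    type8Key).symm

end
end

section
/- For every integer 1 ≤ l ≤ n−1, the K-span in B_n^(2) of the images of all words of length n−l in the generators has dimension binom(n, l−1) · ( (l−1) + Σ_{i=0}^{n−l−2} (i+l)·2^i ), where the sum is understood as 0 when n−l−2 < 0. Moreover, every word of length at least n in the generators lies in the defining ideal I_n, so the homogeneous components of B_n^(2) of degree ≥ n vanish; in particular the top nonvanishing degree of B_n^(2) is n−1. -/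
/-!
Statement 3: dimensions of the graded components of the monomial algebra `B_n^(2)`,
and vanishing in degrees ≥ n.
-/

noncomputable section

/-- Index type for the generators `r_{ij}^m` of `B_n^(2)`:
`1 ≤ i < j ≤ n`, `m ∈ {1,…,n} ∖ {i,j}`.  An element is `(i, j, m)`. -/
abbrev B2Idx (n : ℕ) : Type :=
  {x : ℕ × ℕ × ℕ //
    x.1 ∈ Finset.Icc 1 n ∧ x.2.1 ∈ Finset.Icc 1 n ∧ x.2.2 ∈ Finset.Icc 1 n ∧
    x.1 < x.2.1 ∧ x.2.2 ≠ x.1 ∧ x.2.2 ≠ x.2.1}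

variable (K : Type) [Field K] (n : ℕ)

/-- The generating set of the defining (monomial) ideal `I_n` of `B_n^(2)`:
all products `r_{ij}^m r_{ab}^l` such that NOT `[j = a ∧ (l = m ∨ l = i)]`. -/
def b2Rels : Set (FreeAlgebra K (B2Idx n)) :=
  {x | ∃ g1 g2 : B2Idx n,
      ¬(g2.1.1 = g1.1.2.1 ∧ (g2.1.2.2 = g1.1.2.2 ∨ g2.1.2.2 = g1.1.1)) ∧
      x = FreeAlgebra.ι K g1 * FreeAlgebra.ι K g2}

/-- The relation presenting `B_n^(2)` as a `RingQuot`. -/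
def b2Rel : FreeAlgebra K (B2Idx n) → FreeAlgebra K (B2Idx n) → Prop :=
  fun a b => a ∈ b2Rels K n ∧ b = 0

/-- The monomial algebra `B_n^(2)`. -/
abbrev B2Alg := RingQuot (b2Rel K n)

/-- The image in `B_n^(2)` of a word in the generators. -/
def wordImage (w : List (B2Idx n)) : B2Alg K n :=
  RingQuot.mkAlgHom K (b2Rel K n) ((w.map (FreeAlgebra.ι K)).prod)

/-- The degree-`d` homogeneous component of `B_n^(2)`: the span of images of words of
length `d` in the generators. -/
def W (d : ℕ) : Submodule K (B2Alg K n) :=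
  Submodule.span K {x | ∃ w : List (B2Idx n), w.length = d ∧ x = wordImage K n w}

/-!
Since `I_n` is a monomial ideal, the images of the admissible words (no two adjacent letters
forming a relation) span `B_n^(2)`, and they are linearly independent because `B_n^(2)` acts on
the free vector space on admissible words by prepending letters. In an admissible word
`r_{i₁j₁}^{m₁} ⋯ r_{i_d j_d}^{m_d}` one has `i_{k+1} = j_k`, so `i₁ < j₁ < ⋯ < j_d` is a
`(d+1)`-subset of `{1, …, n}`, and `m_{k+1} ∈ {m_k, i_k} ∖ {j_{k+1}}`. The second option is always
available and the first fails only when `m_k = j_{k+1}`, which happens for exactly one sequence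
`m₁ = ⋯ = m_k = j_{k+1}`. Hence the number of superscript sequences is
`N₁ = n - 2`, `N_{k+1} = 2 N_k - 1`, i.e. `N_d = (n - 3) 2^{d-1} + 1`, and there are
`binom(n, d+1) N_d` admissible words of length `d`; this vanishes for `d ≥ n`. Formally, admissible
words are counted by induction on `d` according to the indices `j` and `m` of their last letter.
-/

variable {n} in
def Admissible (g₁ g₂ : B2Idx n) : Prop :=
  g₂.1.1 = g₁.1.2.1 ∧ (g₂.1.2.2 = g₁.1.2.2 ∨ g₂.1.2.2 = g₁.1.1)

instance : DecidableRel (Admissible (n := n)) := fun _ _ => by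
  unfold Admissible; infer_instance

instance : Fintype (B2Idx n) :=
  Fintype.subtype ((Finset.Icc 1 n ×ˢ Finset.Icc 1 n ×ˢ Finset.Icc 1 n).filter
    fun x => x.1 < x.2.1 ∧ x.2.2 ≠ x.1 ∧ x.2.2 ≠ x.2.1) (by simp [and_assoc])

section Counting

open Finset

variable {n}

def extensions : List (B2Idx n) → Finset (B2Idx n)
  | [] => univ
  | g :: _ => {g' | Admissible g g'}

variable (n) in
/-- The admissible words of length `d`, written from right to left, so that appending a letter
is `List.cons`. -/
def revChains : ℕ → Finset (List (B2Idx n))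
  | 0 => {[]}
  | d + 1 => (revChains d).biUnion fun w => (extensions w).image (· :: w)

lemma mem_extensions {g : B2Idx n} {w : List (B2Idx n)} :
    g ∈ extensions w ↔ ∀ g' ∈ w.head?, Admissible g' g := by
  cases w <;> simp [extensions]

lemma mem_revChains {d : ℕ} {w : List (B2Idx n)} :
    w ∈ revChains n d ↔ w.reverse.IsChain Admissible ∧ w.length = d := by
  rw [List.isChain_reverse]
  induction d generalizing w with
  | zero => cases w <;> simp [revChains]
  | succ d ih =>
    simp only [revChains, mem_biUnion, mem_image]
    constructor
    · rintro ⟨u, hu, g, hg, rfl⟩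
      exact ⟨List.isChain_cons.2 ⟨mem_extensions.1 hg, (ih.1 hu).1⟩, by simp [(ih.1 hu).2]⟩
    · rintro ⟨hc, hl⟩
      cases w with
      | nil => simp at hl
      | cons g u =>
        obtain ⟨hg, hu⟩ := List.isChain_cons.1 hc
        exact ⟨u, ih.2 ⟨hu, by simpa using hl⟩, g, mem_extensions.2 hg, rfl⟩

lemma exists_eq_cons_of_mem_revChains {d : ℕ} (hd : 1 ≤ d) {w : List (B2Idx n)}
    (hw : w ∈ revChains n d) : ∃ g t, w = g :: t :=
  List.exists_cons_of_length_pos (by rw [(mem_revChains.1 hw).2]; omega)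

lemma card_filter_revChains_succ (p : List (B2Idx n) → Prop) [DecidablePred p] (d : ℕ) :
    #{w ∈ revChains n (d + 1) | p w} = ∑ w ∈ revChains n d, #{g ∈ extensions w | p (g :: w)} := by
  rw [revChains, filter_biUnion, card_biUnion]
  · refine sum_congr rfl fun w _ => ?_
    rw [filter_image, card_image_of_injective _ fun a b h => (List.cons_eq_cons.1 h).1]
  · intro u _ v _ huv
    simp only [disjoint_left, mem_filter, mem_image]
    rintro _ ⟨⟨a, -, rfl⟩, -⟩ ⟨⟨b, -, h⟩, -⟩
    exact huv (List.cons_eq_cons.1 h).2.symm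

lemma card_filter_eq_card_of_mem_iff (p : B2Idx n → Prop) [DecidablePred p]
    (s : Finset (ℕ × ℕ × ℕ)) (hs : ∀ x, x ∈ s ↔ ∃ hx, p ⟨x, hx⟩) : #{g | p g} = #s := by
  rw [← card_map (Function.Embedding.subtype _)]
  congr 1
  ext x
  simp [hs]

lemma card_filter_j_eq_and_m_eq {x y : ℕ} (hxy : x < y) (hy : y ≤ n) :
    #{g : B2Idx n | g.1.2.1 = x ∧ g.1.2.2 = y} = x - 1 := by
  rw [card_filter_eq_card_of_mem_iff _ ((Ico 1 x).image fun i => (i, x, y)),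
    card_image_of_injective _ fun a b h => by simpa using h, Nat.card_Ico]
  rintro ⟨i, j, m⟩
  simp only [mem_image, mem_Ico, mem_Icc, Prod.mk.injEq]
  grind

lemma card_filter_j_eq {x : ℕ} (hx : x ≤ n) :
    #{g : B2Idx n | g.1.2.1 = x} = (x - 1) * (n - 2) := by
  rw [card_eq_sum_card_fiberwise (f := fun g => g.1.1) (t := Ico 1 x)]
  · rw [sum_congr rfl (g := fun _ => n - 2), sum_const, Nat.card_Ico, smul_eq_mul]
    intro i hi
    rw [mem_Ico] at hi
    rw [filter_filter, card_filter_eq_card_of_mem_iff _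
        ((((Icc 1 n).erase i).erase x).image fun m => (i, x, m)),
      card_image_of_injective _ fun a b h => by simpa using h, card_erase_of_mem,
      card_erase_of_mem, Nat.card_Icc]
    · omega
    · simp only [mem_Icc]; omega
    · simp only [mem_erase, mem_Icc]; omega
    · rintro ⟨i', j, m⟩
      simp only [mem_image, mem_erase, mem_Icc, Prod.mk.injEq]
      grind
  · intro g hg
    have := g.2
    simp only [coe_filter, mem_univ, true_and, Set.mem_ofPred_eq, mem_Icc, coe_Ico,
      Set.mem_Ico] at hg this ⊢
    omega

lemma card_filter_admissible_j_eq_and_m_eq (g' : B2Idx n) {x y : ℕ} (hxy : x < y) :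
    #{g | Admissible g' g ∧ g.1.2.1 = x ∧ g.1.2.2 = y} =
      if g'.1.2.1 < x ∧ g'.1.2.2 = y then 1 else 0 := by
  obtain ⟨⟨i', j', m'⟩, hg'⟩ := g'
  simp only [mem_Icc] at hg'
  dsimp only
  split_ifs with h
  · rw [card_filter_eq_card_of_mem_iff _ {(j', x, y)}, card_singleton]
    rintro ⟨i, j, m⟩
    simp only [mem_singleton, Prod.mk.injEq, Admissible, mem_Icc, exists_prop]
    omega
  · rw [card_filter_eq_card_of_mem_iff _ ∅, card_empty]
    rintro ⟨i, j, m⟩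
    simp only [notMem_empty, false_iff, Admissible, mem_Icc, exists_prop]
    omega

lemma card_filter_admissible_j_eq (g' : B2Idx n) {x : ℕ} (hx : x ≤ n) :
    #{g | Admissible g' g ∧ g.1.2.1 = x} =
      if g'.1.2.1 < x then (if g'.1.2.2 = x then 1 else 2) else 0 := by
  obtain ⟨⟨i', j', m'⟩, hg'⟩ := g'
  simp only [mem_Icc] at hg'
  dsimp only
  split_ifs with h hm
  · rw [card_filter_eq_card_of_mem_iff _ {(j', x, i')}, card_singleton]
    rintro ⟨i, j, m⟩
    simp only [mem_singleton, Prod.mk.injEq, Admissible, mem_Icc, exists_prop]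
    omega
  · rw [card_filter_eq_card_of_mem_iff _ {(j', x, m'), (j', x, i')}, card_pair (by grind)]
    rintro ⟨i, j, m⟩
    simp only [mem_insert, mem_singleton, Prod.mk.injEq, Admissible, mem_Icc, exists_prop]
    omega
  · rw [card_filter_eq_card_of_mem_iff _ ∅, card_empty]
    rintro ⟨i, j, m⟩
    simp only [notMem_empty, false_iff, Admissible, mem_Icc, exists_prop]
    omega

lemma card_filter_lt_and_eq_sum {α : Type*} (s : Finset α) (f : α → ℕ) (p : α → Prop)
    [DecidablePred p] (x : ℕ) :
    #{a ∈ s | f a < x ∧ p a} = ∑ y ∈ range x, #{a ∈ s | f a = y ∧ p a} := by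
  rw [card_eq_sum_card_fiberwise (f := f) (t := range x) (by intro a; simp +contextual)]
  refine sum_congr rfl fun y hy => ?_
  rw [filter_filter]
  congr 1
  refine filter_congr fun a _ => ?_
  rw [mem_range] at hy
  constructor
  · rintro ⟨⟨-, hp⟩, rfl⟩; exact ⟨rfl, hp⟩
  · rintro ⟨rfl, hp⟩; exact ⟨⟨hy, hp⟩, rfl⟩

lemma card_filter_lt_eq_sum {α : Type*} (s : Finset α) (f : α → ℕ) (x : ℕ) :
    #{a ∈ s | f a < x} = ∑ y ∈ range x, #{a ∈ s | f a = y} := by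
  simpa using card_filter_lt_and_eq_sum s f (fun _ => True) x

lemma sum_range_choose_pred {d : ℕ} (hd : d ≠ 0) (x : ℕ) :
    ∑ y ∈ range x, (y - 1).choose d = (x - 1).choose (d + 1) := by
  induction x with
  | zero => simp
  | succ x ih =>
    rw [sum_range_succ, ih]
    rcases x with _ | x
    · simp [Nat.choose_eq_zero_of_lt (Nat.pos_of_ne_zero hd)]
    · simp [Nat.choose_succ_succ', add_comm]

def headJ : List (B2Idx n) → ℕ
  | [] => 0
  | g :: _ => g.1.2.1

def headM : List (B2Idx n) → ℕ
  | [] => 0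
  | g :: _ => g.1.2.2

lemma card_revChains_headJ_headM {d : ℕ} (hd : 1 ≤ d) {x y : ℕ} (hxy : x < y) (hy : y ≤ n) :
    #{w ∈ revChains n d | headJ w = x ∧ headM w = y} = (x - 1).choose d := by
  induction d, hd using Nat.le_induction generalizing x with
  | base =>
    rw [card_filter_revChains_succ]
    simp only [revChains, extensions, sum_singleton, headJ, headM, Nat.choose_one_right]
    exact card_filter_j_eq_and_m_eq hxy hy
  | succ d hd ih =>
    rw [card_filter_revChains_succ]
    calc ∑ w ∈ revChains n d, #{g ∈ extensions w | headJ (g :: w) = x ∧ headM (g :: w) = y}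
        = #{w ∈ revChains n d | headJ w < x ∧ headM w = y} := by
          rw [card_filter]
          refine sum_congr rfl fun w hw => ?_
          obtain ⟨g', t, rfl⟩ := exists_eq_cons_of_mem_revChains hd hw
          rw [extensions, filter_filter]
          exact card_filter_admissible_j_eq_and_m_eq g' hxy
      _ = ∑ x' ∈ range x, (x' - 1).choose d := by
          rw [card_filter_lt_and_eq_sum]
          exact sum_congr rfl fun x' hx' => ih ((mem_range.1 hx').trans hxy)
      _ = (x - 1).choose (d + 1) := sum_range_choose_pred (by omega) x

/-- A word whose last letter has `j < x` has two admissible continuations with `j = x`, except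
that keeping the superscript is forbidden when it equals `x`. -/
lemma sum_card_extensions_headJ_add {d : ℕ} (hd : 1 ≤ d) {x : ℕ} (hx : x ≤ n) :
    ∑ w ∈ revChains n d, #{g ∈ extensions w | headJ (g :: w) = x} +
        #{w ∈ revChains n d | headJ w < x ∧ headM w = x} =
      2 * #{w ∈ revChains n d | headJ w < x} := by
  rw [card_filter, card_filter, mul_sum, ← sum_add_distrib]
  refine sum_congr rfl fun w hw => ?_
  obtain ⟨g', t, rfl⟩ := exists_eq_cons_of_mem_revChains hd hw
  have hext : #{g ∈ extensions (g' :: t) | headJ (g :: g' :: t) = x} =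
      if g'.1.2.1 < x then (if g'.1.2.2 = x then 1 else 2) else 0 := by
    rw [extensions, filter_filter]
    exact card_filter_admissible_j_eq g' hx
  rw [hext]
  simp only [headJ, headM]
  by_cases hj : g'.1.2.1 < x <;> by_cases hm : g'.1.2.2 = x <;> simp [hj, hm]

variable (n) in
/-- The number of superscript sequences of an admissible word of length `d ≥ 1` with prescribed
indices `i₁ < j₁ < ⋯ < j_d`. -/
def superscriptCount (d : ℕ) : ℕ := (n - 3) * 2 ^ (d - 1) + 1

lemma superscriptCount_succ_add_one {d : ℕ} (hd : 1 ≤ d) :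
    superscriptCount n (d + 1) + 1 = 2 * superscriptCount n d := by
  obtain ⟨e, rfl⟩ : ∃ e, d = e + 1 := ⟨d - 1, by omega⟩
  simp only [superscriptCount, Nat.add_sub_cancel, pow_succ]
  ring

lemma card_revChains_headJ (hn : 3 ≤ n) {d : ℕ} (hd : 1 ≤ d) {x : ℕ} (hx : x ≤ n) :
    #{w ∈ revChains n d | headJ w = x} = (x - 1).choose d * superscriptCount n d := by
  induction d, hd using Nat.le_induction generalizing x with
  | base =>
    rw [card_filter_revChains_succ]
    simp only [revChains, extensions, sum_singleton, headJ, superscriptCount, Nat.choose_one_right,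
      Nat.sub_self, pow_zero, mul_one]
    rw [show n - 3 + 1 = n - 2 by omega]
    exact card_filter_j_eq hx
  | succ d hd ih =>
    set X := (x - 1).choose (d + 1)
    have hlt : #{w ∈ revChains n d | headJ w < x} = X * superscriptCount n d := by
      rw [card_filter_lt_eq_sum, sum_congr rfl fun x' hx' => ih ((mem_range.1 hx').le.trans hx),
        ← sum_mul, sum_range_choose_pred (by omega)]
    have hlt_eq : #{w ∈ revChains n d | headJ w < x ∧ headM w = x} = X := by
      rw [card_filter_lt_and_eq_sum, sum_congr rfl fun x' hx' =>
        card_revChains_headJ_headM hd (mem_range.1 hx') hx, sum_range_choose_pred (by omega)]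
    have key := sum_card_extensions_headJ_add hd hx
    rw [hlt, hlt_eq] at key
    rw [card_filter_revChains_succ]
    have hX : X * superscriptCount n (d + 1) + X = 2 * (X * superscriptCount n d) := by
      rw [mul_left_comm, ← superscriptCount_succ_add_one hd]
      ring
    omega

lemma card_revChains (hn : 3 ≤ n) {d : ℕ} (hd : 1 ≤ d) :
    #(revChains n d) = n.choose (d + 1) * superscriptCount n d := by
  have hj : ∀ w ∈ revChains n d, headJ w < n + 1 := by
    intro w hw
    obtain ⟨g, t, rfl⟩ := exists_eq_cons_of_mem_revChains hd hw
    exact Nat.lt_succ_of_le (mem_Icc.1 g.2.2.1).2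
  rw [← filter_true_of_mem hj, card_filter_lt_eq_sum,
    sum_congr rfl fun x hx => card_revChains_headJ hn hd (Nat.lt_add_one_iff.1 (mem_range.1 hx)),
    ← sum_mul, sum_range_choose_pred (by omega), Nat.add_sub_cancel]

lemma revChains_eq_empty (hn : 3 ≤ n) {d : ℕ} (hd : n ≤ d) : revChains n d = ∅ := by
  rw [← card_eq_zero, card_revChains hn (by omega), Nat.choose_eq_zero_of_lt (by omega),
    zero_mul]

lemma sum_range_add_mul_two_pow (k l : ℕ) :
    ∑ i ∈ range k, (i + l) * 2 ^ i + l + 2 ^ (k + 1) = (k + l) * 2 ^ k + 2 := by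
  induction k with
  | zero => simp
  | succ k ih =>
    rw [sum_range_succ]
    generalize ∑ i ∈ range k, (i + l) * 2 ^ i = S at ih ⊢
    ring_nf at ih ⊢
    omega

lemma superscriptCount_sub (hn : 3 ≤ n) {l : ℕ} (hl : 1 ≤ l) (hln : l < n) :
    superscriptCount n (n - l) = (l - 1) + ∑ i ∈ range (n - l - 1), (i + l) * 2 ^ i := by
  obtain ⟨k, rfl⟩ : ∃ k, n = k + l + 1 := ⟨n - l - 1, by omega⟩
  have h := sum_range_add_mul_two_pow k l
  rw [superscriptCount, show k + l + 1 - l - 1 = k by omega]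
  generalize ∑ i ∈ range k, (i + l) * 2 ^ i = S at h ⊢
  obtain ⟨c, hc⟩ : ∃ c, k + l = c + 2 := ⟨k + l - 2, by omega⟩
  rw [hc, pow_succ] at h
  rw [show k + l + 1 - 3 = c by omega]
  ring_nf at h ⊢
  omega

end Counting

lemma wordImage_eq_zero_of_not_isChain {w : List (B2Idx n)} (hw : ¬ w.IsChain Admissible) :
    wordImage K n w = 0 := by
  rw [List.isChain_iff_forall_rel_of_append_cons_cons] at hw
  push Not at hw
  obtain ⟨a, b, u, v, rfl, hab⟩ := hw
  have hrel : b2Rel K n (FreeAlgebra.ι K a * FreeAlgebra.ι K b) 0 := ⟨⟨a, b, hab, rfl⟩, rfl⟩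
  simp only [wordImage, List.map_append, List.map_cons, List.prod_append, List.prod_cons,
    ← mul_assoc (FreeAlgebra.ι K a), map_mul, RingQuot.mkAlgHom_rel K hrel]
  simp

lemma wordImage_eq_zero_of_le_length (hn : 3 ≤ n) {w : List (B2Idx n)} (hw : n ≤ w.length) :
    wordImage K n w = 0 :=
  wordImage_eq_zero_of_not_isChain K n fun hc => by
    simpa [revChains_eq_empty hn hw] using
      (mem_revChains (d := w.length) (w := w.reverse)).2 ⟨by simpa using hc, by simp⟩

def prependEnd (g : B2Idx n) : Module.End K (List (B2Idx n) →₀ K) :=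
  Finsupp.lift _ K _ fun w => if (g :: w).IsChain Admissible then Finsupp.single (g :: w) 1 else 0

lemma prependEnd_single (g : B2Idx n) (w : List (B2Idx n)) :
    prependEnd K n g (Finsupp.single w 1) =
      if (g :: w).IsChain Admissible then Finsupp.single (g :: w) 1 else 0 := by
  simp [prependEnd]

def actionOnChains : B2Alg K n →ₐ[K] Module.End K (List (B2Idx n) →₀ K) :=
  RingQuot.liftAlgHom K ⟨FreeAlgebra.lift K (prependEnd K n), by
    rintro _ _ ⟨⟨a, b, hab, rfl⟩, rfl⟩
    have hab : ¬ Admissible a b := hab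
    refine Finsupp.lhom_ext' fun w => LinearMap.ext_ring ?_
    simp only [map_mul, FreeAlgebra.lift_ι_apply, map_zero, Module.End.mul_apply,
      LinearMap.comp_apply, Finsupp.lsingle_apply, LinearMap.zero_apply, prependEnd_single]
    split_ifs <;> simp [prependEnd_single, List.isChain_cons_cons, hab]⟩

lemma actionOnChains_wordImage (w : List (B2Idx n)) :
    actionOnChains K n (wordImage K n w) (Finsupp.single [] 1) =
      if w.IsChain Admissible then Finsupp.single w 1 else 0 := by
  induction w with
  | nil => simp [wordImage]
  | cons g w ih =>
    have hcons : wordImage K n (g :: w) =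
        RingQuot.mkAlgHom K (b2Rel K n) (FreeAlgebra.ι K g) * wordImage K n w := by
      simp [wordImage]
    rw [hcons, map_mul, Module.End.mul_apply, ih]
    by_cases hgw : (g :: w).IsChain Admissible
    · have hw : w.IsChain Admissible := hgw.tail
      simp [actionOnChains, prependEnd_single, hgw, hw]
    · split_ifs <;> simp [actionOnChains, prependEnd_single, hgw]

lemma W_eq_span_revChains (d : ℕ) :
    W K n d = Submodule.span K (Set.range fun w : revChains n d => wordImage K n w.1.reverse) := by
  apply le_antisymm
  · rw [W, Submodule.span_le]
    rintro _ ⟨w, rfl, rfl⟩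
    by_cases hw : w.IsChain Admissible
    · exact Submodule.subset_span ⟨⟨w.reverse, mem_revChains.2 (by simpa using hw)⟩, by simp⟩
    · simp [wordImage_eq_zero_of_not_isChain K n hw]
  · rw [Submodule.span_le]
    rintro _ ⟨w, rfl⟩
    exact Submodule.subset_span ⟨w.1.reverse, by simp [(mem_revChains.1 w.2).2], rfl⟩

lemma linearIndependent_wordImage_reverse (d : ℕ) :
    LinearIndependent K fun w : revChains n d => wordImage K n w.1.reverse := by
  let evalAtEmpty := (LinearMap.applyₗ (Finsupp.single [] 1)).comp (actionOnChains K n).toLinearMap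
  have hchain (w : revChains n d) : w.1.reverse.IsChain Admissible := (mem_revChains.1 w.2).1
  have hcomp : evalAtEmpty ∘ (fun w : revChains n d => wordImage K n w.1.reverse) =
      fun w => Finsupp.single w.1.reverse 1 := by
    funext w
    simp [evalAtEmpty, actionOnChains_wordImage, hchain]
  apply LinearIndependent.of_comp evalAtEmpty
  rw [hcomp]
  exact (Finsupp.linearIndependent_single_one K (List (B2Idx n))).comp _
    fun a b h => Subtype.ext (List.reverse_injective h)

lemma finrank_W (d : ℕ) : Module.finrank K (W K n d) = (revChains n d).card := by
  rw [W_eq_span_revChains, finrank_span_eq_card (linearIndependent_wordImage_reverse K n d),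
    Fintype.card_coe]

/-- For `1 ≤ l ≤ n-1` the degree-`(n-l)` component of `B_n^(2)` has
dimension `binom(n, l-1)·((l-1) + Σ_{i=0}^{n-l-2} (i+l)·2^i)`; moreover every word of
length ≥ n lies in the defining ideal, so the components of degree ≥ n vanish. -/
theorem statement3 (hn : 3 ≤ n) :
    (∀ l : ℕ, 1 ≤ l → l ≤ n - 1 →
      Module.finrank K ↥(W K n (n - l)) =
        Nat.choose n (l - 1) *
          ((l - 1) + ∑ i ∈ Finset.range (n - l - 1), (i + l) * 2 ^ i)) ∧
    (∀ w : List (B2Idx n), n ≤ w.length → wordImage K n w = 0) ∧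
    (∀ d : ℕ, n ≤ d → W K n d = ⊥) := by
  refine ⟨fun l hl hln => ?_, fun w hw => wordImage_eq_zero_of_le_length K n hn hw,
    fun d hd => ?_⟩
  · rw [finrank_W, card_revChains hn (by omega), show n - l + 1 = n - (l - 1) by omega,
      Nat.choose_symm (by omega), superscriptCount_sub hn hl (by omega)]
  · rw [W, Submodule.span_eq_bot]
    rintro _ ⟨w, rfl, rfl⟩
    exact wordImage_eq_zero_of_le_length K n hn hd

end
end
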